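/- arXiv:1312.5448 — 2 statements merged into one kernel-verified Lean document; each statement's English description precedes it below -/
import Mathlib

section
/- Conversely, let f: [0,1] × [0,π] → ℝ be continuous. If D(v,ω) = 0 for all (v,ω) ∈ [0,1]², where D(v,ω) = (1/2π)(∫_0^v ∫_0^{πω} f(u,λ) dλ du − v ∫_0^{πω} ∫_0^1 f(u,λ) du dλ), then f(u,λ) does not depend on u, i.e., f(u₁,λ) = f(u₂,λ) for all u₁, u₂ ∈ [0,1] and λ ∈ [0,π]. -/
/-!
Clamping the arguments extends `f` to a continuous function on the plane without changing `D`.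
With `F_t(u) = ∫₀ᵗ f(u, λ) dλ` and `c_t = ∫₀ᵗ ∫₀¹ f(u', λ) du' dλ`, the vanishing of `D` says
`∫₀ᵛ F_t = v c_t`. Differentiating in `v` gives `F_t(u) = c_t` for every `u`, and differentiating
this in `t` gives `f(u, t) = ∫₀¹ f(u', t) du'`.
-/

/-- The deviation measure `D(v,ω)` from (1.1). -/
noncomputable def Dstat (f : ℝ → ℝ → ℝ) (v ω : ℝ) : ℝ :=
  1 / (2 * Real.pi) *
    ((∫ u in (0 : ℝ)..v, ∫ lam in (0 : ℝ)..(Real.pi * ω), f u lam) -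
      v * ∫ lam in (0 : ℝ)..(Real.pi * ω), ∫ u in (0 : ℝ)..1, f u lam)

open Set Function intervalIntegral Real

theorem eqOn_Icc_of_forall_integral_eq {E : Type*} [NormedAddCommGroup E] [NormedSpace ℝ E]
    [CompleteSpace E] {φ ψ : ℝ → E} (hφ : Continuous φ) (hψ : Continuous ψ) {a b : ℝ}
    (hab : a < b) (h : ∀ t ∈ Icc a b, ∫ x in a..t, φ x = ∫ x in a..t, ψ x) :
    EqOn φ ψ (Icc a b) := by
  intro t ht
  have hφ' := (integral_hasDerivAt_right (hφ.intervalIntegrable a t)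
    hφ.aestronglyMeasurable.stronglyMeasurableAtFilter hφ.continuousAt).hasDerivWithinAt
    (s := Icc a b)
  have hψ' := (integral_hasDerivAt_right (hψ.intervalIntegrable a t)
    hψ.aestronglyMeasurable.stronglyMeasurableAtFilter hψ.continuousAt).hasDerivWithinAt
    (s := Icc a b)
  exact (uniqueDiffOn_Icc hab t ht).eq_deriv _
    (hφ'.congr (fun x hx => (h x hx).symm) (h t ht).symm) hψ'

theorem Dstat_eq_zero_iff (f : ℝ → ℝ → ℝ) (v ω : ℝ) :
    Dstat f v ω = 0 ↔ (∫ u in (0 : ℝ)..v, ∫ lam in (0 : ℝ)..(π * ω), f u lam) =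
      v * ∫ lam in (0 : ℝ)..(π * ω), ∫ u in (0 : ℝ)..1, f u lam := by
  simp [Dstat, pi_ne_zero, sub_eq_zero]

theorem eq_integral_of_integral_integral_eq_mul (g : ℝ → ℝ → ℝ) (hg : Continuous (uncurry g))
    {T : ℝ} (hT : 0 < T)
    (h : ∀ v ∈ Icc (0 : ℝ) 1, ∀ t ∈ Icc 0 T,
      (∫ u in (0 : ℝ)..v, ∫ lam in (0 : ℝ)..t, g u lam) =
        v * ∫ lam in (0 : ℝ)..t, ∫ u in (0 : ℝ)..1, g u lam) :
    ∀ u ∈ Icc (0 : ℝ) 1, ∀ lam ∈ Icc 0 T, g u lam = ∫ u' in (0 : ℝ)..1, g u' lam := by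
  have hpartial : ∀ t ∈ Icc 0 T, EqOn (fun u => ∫ lam in (0 : ℝ)..t, g u lam)
      (fun _ => ∫ lam in (0 : ℝ)..t, ∫ u in (0 : ℝ)..1, g u lam) (Icc 0 1) := fun t ht =>
    eqOn_Icc_of_forall_integral_eq (by fun_prop) continuous_const zero_lt_one fun v hv => by
      simpa using h v hv t ht
  intro u hu
  exact eqOn_Icc_of_forall_integral_eq (by fun_prop) (by fun_prop) hT fun t ht =>
    hpartial t ht hu

theorem Dstat_congr {f g : ℝ → ℝ → ℝ}
    (hfg : ∀ u ∈ Icc (0 : ℝ) 1, ∀ lam ∈ Icc 0 π, f u lam = g u lam) {v ω : ℝ}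
    (hv : v ∈ Icc (0 : ℝ) 1) (hω : ω ∈ Icc (0 : ℝ) 1) : Dstat f v ω = Dstat g v ω := by
  have hπω : Icc 0 (π * ω) ⊆ Icc 0 π :=
    Icc_subset_Icc_right (mul_le_of_le_one_right pi_pos.le hω.2)
  have hπω₀ : 0 ≤ π * ω := mul_nonneg pi_pos.le hω.1
  have hinner : ∀ u ∈ Icc (0 : ℝ) 1,
      ∫ lam in (0 : ℝ)..(π * ω), f u lam = ∫ lam in (0 : ℝ)..(π * ω), g u lam :=
    fun u hu => integral_congr fun lam hlam =>
      hfg u hu lam (hπω (by rwa [uIcc_of_le hπω₀] at hlam))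
  have houter : ∫ u in (0 : ℝ)..v, ∫ lam in (0 : ℝ)..(π * ω), f u lam =
      ∫ u in (0 : ℝ)..v, ∫ lam in (0 : ℝ)..(π * ω), g u lam :=
    integral_congr fun u hu => hinner u <|
      Icc_subset_Icc_right hv.2 (by rwa [uIcc_of_le hv.1] at hu)
  have hswapped : ∫ lam in (0 : ℝ)..(π * ω), ∫ u in (0 : ℝ)..1, f u lam =
      ∫ lam in (0 : ℝ)..(π * ω), ∫ u in (0 : ℝ)..1, g u lam :=
    integral_congr fun lam hlam => integral_congr fun u hu =>
      hfg u (by rwa [uIcc_of_le zero_le_one] at hu) lam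
        (hπω (by rwa [uIcc_of_le hπω₀] at hlam))
  simp only [Dstat, houter, hswapped]

/-- Conversely, if `D(v,ω) = 0` for all `(v,ω) ∈ [0,1]²` and `f`
is continuous, then `f(u,λ)` does not depend on `u`. -/
theorem stationary_of_Dstat_eq_zero (f : ℝ → ℝ → ℝ)
    (hf : ContinuousOn (fun p : ℝ × ℝ => f p.1 p.2)
      (Set.Icc 0 1 ×ˢ Set.Icc 0 Real.pi))
    (hD : ∀ v ∈ Set.Icc (0 : ℝ) 1, ∀ ω ∈ Set.Icc (0 : ℝ) 1, Dstat f v ω = 0) :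
    ∀ u₁ ∈ Set.Icc (0 : ℝ) 1, ∀ u₂ ∈ Set.Icc (0 : ℝ) 1,
      ∀ lam ∈ Set.Icc 0 Real.pi, f u₁ lam = f u₂ lam := by
  set g : ℝ → ℝ → ℝ := fun u lam =>
    f (projIcc 0 1 zero_le_one u) (projIcc 0 π pi_pos.le lam) with hg_def
  have hg : Continuous (uncurry g) :=
    hf.comp_continuous (f := fun p : ℝ × ℝ =>
      ((projIcc 0 1 zero_le_one p.1 : ℝ), (projIcc 0 π pi_pos.le p.2 : ℝ))) (by fun_prop)
      fun _ => ⟨Subtype.prop _, Subtype.prop _⟩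
  have hgf : ∀ u ∈ Icc (0 : ℝ) 1, ∀ lam ∈ Icc 0 π, g u lam = f u lam := fun u hu lam hlam => by
    simp only [hg_def, projIcc_of_mem _ hu, projIcc_of_mem _ hlam]
  have hDg : ∀ v ∈ Icc (0 : ℝ) 1, ∀ t ∈ Icc 0 π,
      (∫ u in (0 : ℝ)..v, ∫ lam in (0 : ℝ)..t, g u lam) =
        v * ∫ lam in (0 : ℝ)..t, ∫ u in (0 : ℝ)..1, g u lam := by
    intro v hv t ht
    rw [← mul_one π, ← mul_zero π, ← image_mul_left_Icc pi_pos.le zero_le_one] at ht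
    obtain ⟨ω, hω, rfl⟩ := ht
    rw [← Dstat_eq_zero_iff, Dstat_congr hgf hv hω]
    exact hD v hv ω hω
  intro u₁ hu₁ u₂ hu₂ lam hlam
  have hconst := eq_integral_of_integral_integral_eq_mul g hg pi_pos hDg
  rw [← hgf u₁ hu₁ lam hlam, ← hgf u₂ hu₂ lam hlam, hconst u₁ hu₁ lam hlam,
    hconst u₂ hu₂ lam hlam]
end

section
/- Let (a_j)_{j≥1} be real coefficients with ∑_{j≥1} j|a_j| < ∞ and suppose the power series A(z) = 1 − ∑_{j≥1} a_j z^j has no zeros in the closed unit disk |z| ≤ 1. Then 1/A(z) = ∑_{l≥0} ψ_l z^l where the coefficients satisfy ∑_{l≥0} (1+l)|ψ_l| < ∞. -/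
/-!
Let `ε = min_{|z| ≤ 1} |A z|` and split `A = P + T`, where `P` is a truncation of `A` and the
tail `T` has weighted norm `∑ (1 + l) |T_l| < ε / 3`. Then `|P| > ε / 2` on a disc of radius
`r > 1`, so Cauchy's estimates bound the weighted norm of the Taylor series of `P⁻⁽ⁿ⁺¹⁾` by
`C_r (2 / ε)ⁿ⁺¹`. The weighted norm is submultiplicative because `1 + i + j ≤ (1 + i) (1 + j)`,
hence the Neumann series `A⁻¹ = ∑ (-T)ⁿ P⁻⁽ⁿ⁺¹⁾` converges in it, with ratio `< 2 / 3`.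
Since `A` has real coefficients, averaging the inverse with its conjugate series makes its
coefficients real.
-/

open Finset Metric Filter Topology PowerSeries ComplexConjugate

noncomputable section

lemma exists_lt_closedBall_subset {E : Type*} [NormedAddCommGroup E] [NormedSpace ℝ E]
    [ProperSpace E] {x : E} {R : ℝ} (hR : 0 ≤ R) {U : Set E} (hU : IsOpen U)
    (hRU : closedBall x R ⊆ U) : ∃ r, R < r ∧ closedBall x r ⊆ U := by
  obtain ⟨δ, hδ, hδU⟩ := (isCompact_closedBall x R).exists_thickening_subset_open hU hRU
  rw [thickening_closedBall hδ hR] at hδU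
  exact ⟨R + δ / 2, by linarith, (closedBall_subset_ball (by linarith)).trans hδU⟩

namespace PowerSeries

def weightedCoeffNorm (f : ℂ⟦X⟧) (l : ℕ) : ℝ := (1 + l) * ‖coeff l f‖

def weightedNorm (f : ℂ⟦X⟧) : ℝ := ∑' l, f.weightedCoeffNorm l

def tsumEval (f : ℂ⟦X⟧) (z : ℂ) : ℂ := ∑' l, coeff l f * z ^ l

variable {f g : ℂ⟦X⟧} {z : ℂ}

lemma weightedCoeffNorm_nonneg (f : ℂ⟦X⟧) (l : ℕ) : 0 ≤ f.weightedCoeffNorm l := by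
  unfold weightedCoeffNorm; positivity

lemma weightedNorm_nonneg (f : ℂ⟦X⟧) : 0 ≤ f.weightedNorm :=
  tsum_nonneg f.weightedCoeffNorm_nonneg

@[simp]
lemma weightedCoeffNorm_neg (f : ℂ⟦X⟧) : (-f).weightedCoeffNorm = f.weightedCoeffNorm := by
  ext l; simp [weightedCoeffNorm]

lemma weightedNorm_neg (f : ℂ⟦X⟧) : (-f).weightedNorm = f.weightedNorm := by
  simp [weightedNorm]

lemma tsumEval_neg (f : ℂ⟦X⟧) (z : ℂ) : (-f).tsumEval z = -f.tsumEval z := by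
  simp [tsumEval, tsum_neg]

lemma norm_coeff_le_weightedCoeffNorm (f : ℂ⟦X⟧) (l : ℕ) : ‖coeff l f‖ ≤ f.weightedCoeffNorm l :=
  le_mul_of_one_le_left (norm_nonneg _) (le_add_of_nonneg_right l.cast_nonneg)

lemma norm_coeff_mul_pow_le (f : ℂ⟦X⟧) (hz : ‖z‖ ≤ 1) (l : ℕ) :
    ‖coeff l f * z ^ l‖ ≤ f.weightedCoeffNorm l := by
  rw [norm_mul, norm_pow]
  exact (mul_le_of_le_one_right (norm_nonneg _) (pow_le_one₀ (norm_nonneg z) hz)).trans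
    (f.norm_coeff_le_weightedCoeffNorm l)

lemma summable_norm_coeff_mul_pow (hf : Summable f.weightedCoeffNorm) (hz : ‖z‖ ≤ 1) :
    Summable fun l => ‖coeff l f * z ^ l‖ :=
  hf.of_nonneg_of_le (fun _ => norm_nonneg _) (f.norm_coeff_mul_pow_le hz)

lemma norm_tsumEval_le (hf : Summable f.weightedCoeffNorm) (hz : ‖z‖ ≤ 1) :
    ‖f.tsumEval z‖ ≤ f.weightedNorm :=
  (norm_tsum_le_tsum_norm (summable_norm_coeff_mul_pow hf hz)).trans
    ((summable_norm_coeff_mul_pow hf hz).tsum_le_tsum (f.norm_coeff_mul_pow_le hz) hf)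

lemma tsumEval_add (hf : Summable f.weightedCoeffNorm) (hg : Summable g.weightedCoeffNorm)
    (hz : ‖z‖ ≤ 1) : (f + g).tsumEval z = f.tsumEval z + g.tsumEval z := by
  simp only [tsumEval, map_add, add_mul]
  exact (summable_norm_coeff_mul_pow hf hz).of_norm.tsum_add
    (summable_norm_coeff_mul_pow hg hz).of_norm

lemma tsumEval_mul (hf : Summable f.weightedCoeffNorm) (hg : Summable g.weightedCoeffNorm)
    (hz : ‖z‖ ≤ 1) : (f * g).tsumEval z = f.tsumEval z * g.tsumEval z := by
  rw [tsumEval, tsumEval, tsumEval, tsum_mul_tsum_eq_tsum_sum_antidiagonal_of_summable_norm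
    (summable_norm_coeff_mul_pow hf hz) (summable_norm_coeff_mul_pow hg hz)]
  refine tsum_congr fun l => ?_
  rw [coeff_mul, Finset.sum_mul]
  refine Finset.sum_congr rfl fun p hp => ?_
  rw [← mem_antidiagonal.mp hp, pow_add]
  ring

lemma summable_weightedCoeffNorm_coe (p : Polynomial ℂ) :
    Summable (p : ℂ⟦X⟧).weightedCoeffNorm :=
  summable_of_ne_finset_zero (s := range (p.natDegree + 1)) fun l hl => by
    rw [mem_range, not_lt] at hl
    simp [weightedCoeffNorm, Polynomial.coeff_eq_zero_of_natDegree_lt hl]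

lemma tsumEval_coe (p : Polynomial ℂ) (z : ℂ) : (p : ℂ⟦X⟧).tsumEval z = p.eval z := by
  rw [tsumEval, Polynomial.eval_eq_sum_range, tsum_eq_sum (s := range (p.natDegree + 1))]
  · simp
  · intro l hl
    rw [mem_range, not_lt] at hl
    simp [Polynomial.coeff_eq_zero_of_natDegree_lt hl]

lemma weightedCoeffNorm_mul_le (f g : ℂ⟦X⟧) (l : ℕ) :
    (f * g).weightedCoeffNorm l ≤
      ∑ p ∈ antidiagonal l, f.weightedCoeffNorm p.1 * g.weightedCoeffNorm p.2 := by
  rw [weightedCoeffNorm, coeff_mul]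
  grw [norm_sum_le, Finset.mul_sum]
  refine Finset.sum_le_sum fun p hp => ?_
  have hweight : (1 + l : ℝ) ≤ (1 + p.1) * (1 + p.2) := by
    rw [← mem_antidiagonal.mp hp]
    push_cast
    nlinarith [p.1.cast_nonneg (α := ℝ), p.2.cast_nonneg (α := ℝ)]
  rw [norm_mul, weightedCoeffNorm, weightedCoeffNorm]
  calc (1 + l : ℝ) * (‖coeff p.1 f‖ * ‖coeff p.2 g‖)
      ≤ (1 + p.1) * (1 + p.2) * (‖coeff p.1 f‖ * ‖coeff p.2 g‖) := by gcongr
    _ = _ := by ring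

section Submultiplicative

variable (hf : Summable f.weightedCoeffNorm) (hg : Summable g.weightedCoeffNorm)
include hf hg

lemma summable_sum_antidiagonal_weightedCoeffNorm :
    Summable fun l => ∑ p ∈ antidiagonal l, f.weightedCoeffNorm p.1 * g.weightedCoeffNorm p.2 :=
  summable_sum_mul_antidiagonal_of_summable_mul
    (hf.mul_of_nonneg hg f.weightedCoeffNorm_nonneg g.weightedCoeffNorm_nonneg)

lemma summable_weightedCoeffNorm_mul : Summable (f * g).weightedCoeffNorm :=
  (summable_sum_antidiagonal_weightedCoeffNorm hf hg).of_nonneg_of_le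
    (weightedCoeffNorm_nonneg _) (weightedCoeffNorm_mul_le f g)

lemma weightedNorm_mul_le : (f * g).weightedNorm ≤ f.weightedNorm * g.weightedNorm := by
  rw [weightedNorm, weightedNorm, weightedNorm, hf.tsum_mul_tsum_eq_tsum_sum_antidiagonal hg
    (hf.mul_of_nonneg hg f.weightedCoeffNorm_nonneg g.weightedCoeffNorm_nonneg)]
  exact (summable_weightedCoeffNorm_mul hf hg).tsum_le_tsum (weightedCoeffNorm_mul_le f g)
    (summable_sum_antidiagonal_weightedCoeffNorm hf hg)

end Submultiplicative

lemma summable_weightedCoeffNorm_one : Summable (1 : ℂ⟦X⟧).weightedCoeffNorm := by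
  simpa using summable_weightedCoeffNorm_coe 1

lemma weightedNorm_one : (1 : ℂ⟦X⟧).weightedNorm = 1 := by
  rw [weightedNorm, tsum_eq_single 0 fun l hl => by simp [weightedCoeffNorm, hl]]
  simp [weightedCoeffNorm]

lemma tsumEval_one (z : ℂ) : (1 : ℂ⟦X⟧).tsumEval z = 1 := by
  simpa using tsumEval_coe 1 z

section Pow

variable (hf : Summable f.weightedCoeffNorm)
include hf

lemma summable_weightedCoeffNorm_pow (n : ℕ) : Summable (f ^ n).weightedCoeffNorm := by
  induction n with
  | zero => simpa using summable_weightedCoeffNorm_one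
  | succ n ih => simpa [pow_succ] using summable_weightedCoeffNorm_mul ih hf

lemma weightedNorm_pow_le (n : ℕ) : (f ^ n).weightedNorm ≤ f.weightedNorm ^ n := by
  induction n with
  | zero => simp [weightedNorm_one]
  | succ n ih =>
    rw [pow_succ, pow_succ]
    exact (weightedNorm_mul_le (summable_weightedCoeffNorm_pow hf n) hf).trans
      (by gcongr; exact weightedNorm_nonneg _)

lemma tsumEval_pow (hz : ‖z‖ ≤ 1) (n : ℕ) : (f ^ n).tsumEval z = f.tsumEval z ^ n := by
  induction n with
  | zero => simp [tsumEval_one]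
  | succ n ih =>
    rw [pow_succ, pow_succ, tsumEval_mul (summable_weightedCoeffNorm_pow hf n) hf hz, ih]

lemma continuousOn_tsumEval : ContinuousOn f.tsumEval (closedBall 0 1) :=
  continuousOn_tsum (fun l => (continuous_const.mul (continuous_pow l)).continuousOn) hf
    fun l _ hz => f.norm_coeff_mul_pow_le (mem_closedBall_zero_iff.mp hz) l

end Pow

lemma weightedCoeffNorm_sub_trunc (f : ℂ⟦X⟧) (N l : ℕ) :
    (f - trunc N f).weightedCoeffNorm l = if l < N then 0 else f.weightedCoeffNorm l := by
  split_ifs with hl <;> simp [weightedCoeffNorm, Polynomial.coeff_coe, coeff_trunc, hl]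

lemma summable_weightedCoeffNorm_sub_trunc (hf : Summable f.weightedCoeffNorm) (N : ℕ) :
    Summable (f - trunc N f).weightedCoeffNorm :=
  hf.of_nonneg_of_le (weightedCoeffNorm_nonneg _) fun l => by
    rw [weightedCoeffNorm_sub_trunc]
    split_ifs
    exacts [f.weightedCoeffNorm_nonneg l, le_rfl]

lemma tendsto_weightedNorm_sub_trunc (hf : Summable f.weightedCoeffNorm) :
    Tendsto (fun N => (f - trunc N f).weightedNorm) atTop (𝓝 0) := by
  have htail (N : ℕ) : (f - trunc N f).weightedNorm = ∑' l, f.weightedCoeffNorm (l + N) := by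
    rw [weightedNorm, ← (summable_weightedCoeffNorm_sub_trunc hf N).sum_add_tsum_nat_add N]
    simp +contextual [weightedCoeffNorm_sub_trunc, Finset.sum_eq_zero]
  simpa only [htail] using tendsto_sum_nat_add f.weightedCoeffNorm

lemma exists_tsumEval_eq_tsum {u : ℕ → ℂ⟦X⟧} (hu : ∀ n, Summable (u n).weightedCoeffNorm)
    (hsum : Summable fun n => (u n).weightedNorm) :
    ∃ S : ℂ⟦X⟧, Summable S.weightedCoeffNorm ∧
      ∀ z : ℂ, ‖z‖ ≤ 1 → S.tsumEval z = ∑' n, (u n).tsumEval z := by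
  have hw : Summable fun p : ℕ × ℕ => (u p.1).weightedCoeffNorm p.2 :=
    (summable_prod_of_nonneg fun p => weightedCoeffNorm_nonneg _ _).2 ⟨hu, hsum⟩
  have hcoeff (l : ℕ) : Summable fun n => ‖coeff l (u n)‖ :=
    (hw.prod_symm.prod_factor l).of_nonneg_of_le (fun _ => norm_nonneg _) fun n =>
      (u n).norm_coeff_le_weightedCoeffNorm l
  refine ⟨mk fun l => ∑' n, coeff l (u n), ?_, fun z hz => ?_⟩
  · refine hw.prod_symm.prod.of_nonneg_of_le (weightedCoeffNorm_nonneg _) fun l => ?_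
    rw [weightedCoeffNorm, coeff_mk]
    grw [norm_tsum_le_tsum_norm (hcoeff l)]
    rw [← tsum_mul_left]
    rfl
  · have hv : Summable fun p : ℕ × ℕ => coeff p.2 (u p.1) * z ^ p.2 :=
      Summable.of_norm_bounded hw fun p => (u p.1).norm_coeff_mul_pow_le hz p.2
    simp only [tsumEval, coeff_mk, ← tsum_mul_right]
    exact hv.tsum_comm (f := fun n l => coeff l (u n) * z ^ l)

lemma exists_tsumEval_eq_of_differentiableOn {f : ℂ → ℂ} {r M : ℝ} (hr : 1 < r)
    (hf : DifferentiableOn ℂ f (closedBall 0 r)) (hM : ∀ z ∈ sphere (0 : ℂ) r, ‖f z‖ ≤ M) :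
    ∃ q : ℂ⟦X⟧, Summable q.weightedCoeffNorm ∧
      q.weightedNorm ≤ M * ∑' k : ℕ, (1 + k) * r⁻¹ ^ k ∧
      ∀ z : ℂ, ‖z‖ ≤ 1 → q.tsumEval z = f z := by
  have hr₀ : 0 < r := one_pos.trans hr
  set q : ℂ⟦X⟧ := mk fun k => (k.factorial : ℂ)⁻¹ * iteratedDeriv k f 0
  have hcauchy (k : ℕ) : ‖coeff k q‖ ≤ M * r⁻¹ ^ k := by
    have := Complex.norm_iteratedDeriv_le_of_forall_mem_sphere_norm_le k hr₀
      (hf.diffContOnCl_ball subset_rfl) hM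
    rw [coeff_mk, norm_mul, norm_inv, Complex.norm_natCast, inv_pow, ← div_eq_inv_mul,
      div_le_iff₀ (by positivity)]
    exact this.trans_eq (by ring)
  have hgeom : Summable fun k : ℕ => (1 + (k : ℝ)) * r⁻¹ ^ k := by
    have hr' : ‖r⁻¹‖ < 1 := by
      rw [norm_inv, Real.norm_of_nonneg hr₀.le]; exact inv_lt_one_of_one_lt₀ hr
    simpa [add_mul] using (summable_geometric_of_norm_lt_one hr').add
      (summable_pow_mul_geometric_of_norm_lt_one 1 hr')
  have hbound (k : ℕ) : q.weightedCoeffNorm k ≤ M * ((1 + k) * r⁻¹ ^ k) := by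
    rw [weightedCoeffNorm, mul_left_comm]
    gcongr
    exact hcauchy k
  have hq := (hgeom.mul_left M).of_nonneg_of_le (weightedCoeffNorm_nonneg q) hbound
  refine ⟨q, hq, ?_, fun z hz => ?_⟩
  · rw [← tsum_mul_left]
    exact hq.tsum_le_tsum hbound (hgeom.mul_left M)
  · have hz' : z ∈ ball (0 : ℂ) r := mem_ball_zero_iff.mpr (hz.trans_lt hr)
    simpa [tsumEval, q] using Complex.taylorSeries_eq_on_ball' hz' (hf.mono ball_subset_closedBall)

lemma exists_tsumEval_mul_add_eq_one {P T : ℂ⟦X⟧} {Q : ℕ → ℂ⟦X⟧} {K M : ℝ}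
    (hP : Summable P.weightedCoeffNorm) (hT : Summable T.weightedCoeffNorm)
    (hQ : ∀ n, Summable (Q n).weightedCoeffNorm)
    (hQnorm : ∀ n, (Q n).weightedNorm ≤ M ^ (n + 1) * K)
    (hQeval : ∀ n (z : ℂ), ‖z‖ ≤ 1 → (Q n).tsumEval z = (P.tsumEval z ^ (n + 1))⁻¹)
    (hM : 0 ≤ M) (hTM : T.weightedNorm * M < 1)
    (hTP : ∀ z : ℂ, ‖z‖ ≤ 1 → ‖T.tsumEval z‖ < ‖P.tsumEval z‖) :
    ∃ ψ : ℂ⟦X⟧, Summable ψ.weightedCoeffNorm ∧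
      ∀ z : ℂ, ‖z‖ ≤ 1 → ψ.tsumEval z * (P + T).tsumEval z = 1 := by
  have hnegT : Summable (-T).weightedCoeffNorm := by rwa [weightedCoeffNorm_neg]
  have hu (n : ℕ) : Summable ((-T) ^ n * Q n).weightedCoeffNorm :=
    summable_weightedCoeffNorm_mul (summable_weightedCoeffNorm_pow hnegT n) (hQ n)
  have hu_norm (n : ℕ) : ((-T) ^ n * Q n).weightedNorm ≤ M * K * (T.weightedNorm * M) ^ n :=
    calc ((-T) ^ n * Q n).weightedNorm ≤ ((-T) ^ n).weightedNorm * (Q n).weightedNorm :=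
          weightedNorm_mul_le (summable_weightedCoeffNorm_pow hnegT n) (hQ n)
      _ ≤ T.weightedNorm ^ n * (M ^ (n + 1) * K) := by
          refine mul_le_mul ?_ (hQnorm n) (weightedNorm_nonneg _)
            (pow_nonneg (weightedNorm_nonneg T) n)
          exact (weightedNorm_pow_le hnegT n).trans_eq (by rw [weightedNorm_neg])
      _ = M * K * (T.weightedNorm * M) ^ n := by ring
  have hgeom : Summable fun n => M * K * (T.weightedNorm * M) ^ n :=
    (summable_geometric_of_lt_one (mul_nonneg (weightedNorm_nonneg T) hM) hTM).mul_left _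
  obtain ⟨ψ, hψ, hψeval⟩ := exists_tsumEval_eq_tsum hu
    (hgeom.of_nonneg_of_le (fun n => weightedNorm_nonneg _) hu_norm)
  refine ⟨ψ, hψ, fun z hz => ?_⟩
  have hp : P.tsumEval z ≠ 0 := norm_pos_iff.mp ((norm_nonneg _).trans_lt (hTP z hz))
  have hratio : ‖-(T.tsumEval z / P.tsumEval z)‖ < 1 := by
    rw [norm_neg, norm_div, div_lt_one (norm_pos_iff.mpr hp)]
    exact hTP z hz
  have hpt : P.tsumEval z + T.tsumEval z ≠ 0 := by
    intro h
    exact (hTP z hz).ne (by rw [eq_neg_of_add_eq_zero_right h, norm_neg])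
  have hterm (n : ℕ) : ((-T) ^ n * Q n).tsumEval z =
      (P.tsumEval z)⁻¹ * (-(T.tsumEval z / P.tsumEval z)) ^ n := by
    rw [tsumEval_mul (summable_weightedCoeffNorm_pow hnegT n) (hQ n) hz,
      tsumEval_pow hnegT hz, tsumEval_neg, hQeval n z hz, neg_div', div_pow]
    field_simp
    ring
  rw [hψeval z hz, tsum_congr hterm, tsum_mul_left, tsum_geometric_of_norm_lt_one hratio,
    tsumEval_add hP hT hz]
  field_simp
  rw [sub_neg_eq_add, div_self hpt]

lemma exists_pos_le_norm_tsumEval (hf : Summable f.weightedCoeffNorm)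
    (hf₀ : ∀ z : ℂ, ‖z‖ ≤ 1 → f.tsumEval z ≠ 0) :
    ∃ ε > 0, ∀ z : ℂ, ‖z‖ ≤ 1 → ε ≤ ‖f.tsumEval z‖ := by
  obtain ⟨z₀, hz₀, hmin⟩ := (isCompact_closedBall (0 : ℂ) 1).exists_isMinOn
    (nonempty_closedBall.mpr zero_le_one) (continuousOn_tsumEval hf).norm
  exact ⟨_, norm_pos_iff.mpr (hf₀ z₀ (mem_closedBall_zero_iff.mp hz₀)),
    fun z hz => hmin (mem_closedBall_zero_iff.mpr hz)⟩

theorem exists_tsumEval_mul_eq_one (hf : Summable f.weightedCoeffNorm)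
    (hf₀ : ∀ z : ℂ, ‖z‖ ≤ 1 → f.tsumEval z ≠ 0) :
    ∃ ψ : ℂ⟦X⟧, Summable ψ.weightedCoeffNorm ∧
      ∀ z : ℂ, ‖z‖ ≤ 1 → ψ.tsumEval z * f.tsumEval z = 1 := by
  obtain ⟨ε, hε, hεf⟩ := exists_pos_le_norm_tsumEval hf hf₀
  obtain ⟨N, hN⟩ := ((tendsto_weightedNorm_sub_trunc hf).eventually_lt_const
    (by positivity : (0 : ℝ) < ε / 3)).exists
  set P := trunc N f
  set T := f - P
  have hP := summable_weightedCoeffNorm_coe P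
  have hT : Summable T.weightedCoeffNorm := summable_weightedCoeffNorm_sub_trunc hf N
  have hTz (z : ℂ) (hz : ‖z‖ ≤ 1) : ‖T.tsumEval z‖ < ε / 3 := (norm_tsumEval_le hT hz).trans_lt hN
  have hPz (z : ℂ) (hz : ‖z‖ ≤ 1) : ε / 2 < ‖P.eval z‖ := by
    have hsplit : f.tsumEval z = P.eval z + T.tsumEval z := by
      rw [← tsumEval_coe, ← tsumEval_add hP hT hz, add_sub_cancel]
    have := hsplit ▸ norm_add_le (P.eval z) (T.tsumEval z)
    linarith [hεf z hz, hTz z hz]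
  obtain ⟨r, hr, hrP⟩ := exists_lt_closedBall_subset (x := (0 : ℂ)) zero_le_one
    (isOpen_lt continuous_const P.continuous.norm) fun z hz => hPz z (mem_closedBall_zero_iff.mp hz)
  have hQ (n : ℕ) : ∃ q : ℂ⟦X⟧, Summable q.weightedCoeffNorm ∧
      q.weightedNorm ≤ (ε / 2)⁻¹ ^ (n + 1) * ∑' k : ℕ, (1 + k) * r⁻¹ ^ k ∧
      ∀ z : ℂ, ‖z‖ ≤ 1 → q.tsumEval z = ((P : ℂ⟦X⟧).tsumEval z ^ (n + 1))⁻¹ := by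
    have hPr (z) (hz : z ∈ closedBall (0 : ℂ) r) : ε / 2 < ‖P.eval z‖ := hrP hz
    simp only [tsumEval_coe]
    refine exists_tsumEval_eq_of_differentiableOn hr ?_ fun z hz => ?_
    · exact ((P.differentiable.pow _).differentiableOn).inv fun z hz =>
        pow_ne_zero _ (norm_pos_iff.mp ((half_pos hε).trans (hPr z hz)))
    · rw [norm_inv, norm_pow, ← inv_pow]
      gcongr
      exact (hPr z (sphere_subset_closedBall hz)).le
  choose Q hQ hQnorm hQeval using hQ
  obtain ⟨ψ, hψ, hψf⟩ := exists_tsumEval_mul_add_eq_one hP hT hQ hQnorm hQeval (by positivity)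
    (by rw [mul_inv_lt_iff₀ (half_pos hε)]; linarith)
    fun z hz => by rw [tsumEval_coe]; linarith [hTz z hz, hPz z hz]
  exact ⟨ψ, hψ, fun z hz => by simpa [T] using hψf z hz⟩

lemma tsumEval_map_conj (f : ℂ⟦X⟧) (z : ℂ) :
    (map (starRingEnd ℂ) f).tsumEval z = conj (f.tsumEval (conj z)) := by
  simp [tsumEval, Complex.conj_tsum]

theorem exists_real_tsumEval_mul_eq_one {A ψ : ℂ⟦X⟧} (hA : map (starRingEnd ℂ) A = A)
    (hψ : Summable ψ.weightedCoeffNorm)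
    (hψA : ∀ z : ℂ, ‖z‖ ≤ 1 → ψ.tsumEval z * A.tsumEval z = 1) :
    ∃ φ : ℕ → ℝ, (Summable fun l : ℕ => (1 + (l : ℝ)) * |φ l|) ∧
      ∀ z : ℂ, ‖z‖ ≤ 1 → (∑' l, (φ l : ℂ) * z ^ l) * A.tsumEval z = 1 := by
  set ψ' := map (starRingEnd ℂ) ψ
  have hψ' : Summable ψ'.weightedCoeffNorm := by
    refine hψ.congr fun l => ?_
    simp [ψ', weightedCoeffNorm]
  refine ⟨fun l => (coeff l ψ).re, hψ.of_nonneg_of_le (fun l => by positivity) fun l =>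
    mul_le_mul_of_nonneg_left (Complex.abs_re_le_norm _) (by positivity), fun z hz => ?_⟩
  have hψ'A : ψ'.tsumEval z * A.tsumEval z = 1 := by
    rw [tsumEval_map_conj, ← hA, tsumEval_map_conj, ← map_mul, hψA _ (by simpa using hz), map_one]
  have hre (l : ℕ) : ((coeff l ψ).re : ℂ) * z ^ l = coeff l (ψ + ψ') * z ^ l / 2 := by
    simp [ψ', Complex.re_eq_add_conj]
    ring
  rw [tsum_congr hre, tsum_div_const, ← tsumEval, tsumEval_add hψ hψ' hz, div_mul_eq_mul_div,
    add_mul, hψA z hz, hψ'A]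
  norm_num

end PowerSeries

open PowerSeries

/-- Wiener-type lemma: if `∑ j |a_j| < ∞` and
`A(z) = 1 − ∑_{j≥1} a_j z^j` has no zero in the closed unit disk, then
`1/A(z) = ∑_{l≥0} ψ_l z^l` with `∑ (1+l)|ψ_l| < ∞`. -/
theorem wiener_lemma_inverse_power_series (a : ℕ → ℝ)
    (hsum : Summable fun j : ℕ => (j : ℝ) * |a j|)
    (hA : ∀ z : ℂ, ‖z‖ ≤ 1 →
      1 - ∑' j : ℕ, (a (j + 1) : ℂ) * z ^ (j + 1) ≠ 0) :
    ∃ ψ : ℕ → ℝ, (Summable fun l : ℕ => (1 + (l : ℝ)) * |ψ l|) ∧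
      ∀ z : ℂ, ‖z‖ ≤ 1 →
        (∑' l : ℕ, (ψ l : ℂ) * z ^ l) *
          (1 - ∑' j : ℕ, (a (j + 1) : ℂ) * z ^ (j + 1)) = 1 := by
  set A : ℂ⟦X⟧ := mk fun j => if j = 0 then 1 else -(a j : ℂ)
  have hAsum : Summable A.weightedCoeffNorm := by
    refine ((hsum.mul_left 2).add (hasSum_ite_eq 0 (1 : ℝ)).summable).of_nonneg_of_le
      (weightedCoeffNorm_nonneg A) fun j => ?_
    rcases j with _ | j
    · simp [A, weightedCoeffNorm]
    · simp [A, weightedCoeffNorm]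
      nlinarith [abs_nonneg (a (j + 1))]
  have hAeval (z : ℂ) (hz : ‖z‖ ≤ 1) :
      A.tsumEval z = 1 - ∑' j : ℕ, (a (j + 1) : ℂ) * z ^ (j + 1) := by
    rw [tsumEval, (summable_norm_coeff_mul_pow hAsum hz).of_norm.tsum_eq_zero_add]
    simp [A, tsum_neg, sub_eq_add_neg]
  have hAreal : map (starRingEnd ℂ) A = A := by
    ext j
    by_cases hj : j = 0 <;> simp [A, hj]
  obtain ⟨ψ, hψ, hψA⟩ := exists_tsumEval_mul_eq_one hAsum fun z hz => hAeval z hz ▸ hA z hz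
  obtain ⟨φ, hφ, hφA⟩ := exists_real_tsumEval_mul_eq_one hAreal hψ hψA
  exact ⟨φ, hφ, fun z hz => hAeval z hz ▸ hφA z hz⟩
end
end
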